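/- Let (X,d) be a separable metric space such that the action (Iso(X),X) is Cauchy-indivisible. Then the Ellis semigroup E is a group if and only if X_l = X_p. -/

import Mathlib

/-!
Every element of `E` is either a lift `ĝ` or the pointwise limit `f` of the lifts of a divergent
sequence `g_n`, and `f` is then an isometry. By Cauchy-indivisibility, any sequence `g_n` with one
Cauchy orbit has a subsequence whose lifts converge pointwise on `X̂`. The identity
`d(ĝ⁻¹ p, q) = d(p, ĝ q)` shows that `ĝ_n q → p` iff `ĝ_n⁻¹ p → q`.

If `E` is a group and `f = lim ĝ_n`, then `ĝ_n⁻¹ x → f⁻¹ x`, so `X_l ⊆ X_p`. Conversely, if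
`X_l = X_p`, the image of `f` is closed and contains `X`: write `f x = lim h_n z` with `h_n⁻¹ z`
Cauchy; then `g_n⁻¹ x = (g_n⁻¹ h_n)(h_n⁻¹ x)`, where `(g_n⁻¹ h_n) z → x`, and along a subsequence
both factors converge, so `g_n⁻¹ x → b` with `f b = x`. Hence `f` is bijective, and its inverse is
the pointwise limit of `ĝ_n⁻¹`, which lies in `E`.
-/

open Filter Topology Set UniformSpace

noncomputable section

/-- The topology of pointwise convergence on the group of surjective isometries of `X`. -/
instance isoPointwiseTopology (X : Type*) [MetricSpace X] : TopologicalSpace (X ≃ᵢ X) :=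
  TopologicalSpace.induced (fun g => (g : X → X)) Pi.topologicalSpace

/-- A net `g` diverges (`g_i → ∞`), i.e. it has no convergent subnet; equivalently,
no cluster point. -/
def DivergentNet {G : Type*} [TopologicalSpace G] {ι : Type*} [Preorder ι]
    (g : ι → G) : Prop :=
  ∀ h : G, ¬ MapClusterPt h atTop g

/-- A sequence `g` diverges (`g_n → ∞`), i.e. it has no convergent subsequence. -/
def DivergentSeq {G : Type*} [TopologicalSpace G] (g : ℕ → G) : Prop :=
  ∀ φ : ℕ → ℕ, StrictMono φ → ∀ h : G, ¬ Tendsto (g ∘ φ) atTop (𝓝 h)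

/-- The natural evaluation action of `Iso(X)` on `X` is Cauchy-indivisible: whenever a
net `g` in `Iso(X)` has no convergent subnet and `(g_i x)` is a Cauchy net for some
`x`, then `(g_i y)` is a Cauchy net for every `y`. -/
def IsoCauchyIndivisible (X : Type*) [MetricSpace X] : Prop :=
  ∀ (ι : Type*) [Nonempty ι] [Preorder ι] [IsDirected ι (· ≤ ·)],
    ∀ g : ι → X ≃ᵢ X, DivergentNet g →
      (∃ x : X, Cauchy (map (fun i => g i x) atTop)) →
      ∀ y : X, Cauchy (map (fun i => g i y) atTop)

/-- Properness of the isometric evaluation action, expressed through emptiness of all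
limit sets `L(x)`: no net in `Iso(X)` without convergent subnet has `(g_i x)`
converging in `X`. -/
def IsoProperLimits (X : Type*) [MetricSpace X] : Prop :=
  ∀ (ι : Type*) [Nonempty ι] [Preorder ι] [IsDirected ι (· ≤ ·)],
    ∀ g : ι → X ≃ᵢ X, DivergentNet g →
      ∀ x y : X, ¬ Tendsto (fun i => g i x) atTop (𝓝 y)

/-- The canonical lift `ĝ` of an isometry of `X` to the completion `X̂`. -/
def hatIso {X : Type*} [MetricSpace X] (g : X ≃ᵢ X) : Completion X → Completion X :=
  Completion.map (g : X → X)

/-- The lifted group `{ĝ : g ∈ Iso(X)}` inside the selfmaps of `X̂`. -/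
def hatIsoSet (X : Type*) [MetricSpace X] : Set (Completion X → Completion X) :=
  Set.range (hatIso (X := X))

/-- The Ellis semigroup `E`: the closure of the lifted group `{ĝ}` in the topology of
pointwise convergence on selfmaps of `X̂`. -/
def Ellis (X : Type*) [MetricSpace X] : Set (Completion X → Completion X) :=
  closure (hatIsoSet X)

/-- The set `H` of pointwise limits on `X̂` of divergent sequences of lifted isometries. -/
def Hset (X : Type*) [MetricSpace X] : Set (Completion X → Completion X) :=
  { h | Continuous h ∧ ∃ g : ℕ → X ≃ᵢ X, DivergentSeq g ∧
      Tendsto (fun n => hatIso (g n)) atTop (𝓝 h) }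

/-- The set `X_l ⊆ X̂` of limit points of the action `(Iso(X), X)` in the completion. -/
def Xl (X : Type*) [MetricSpace X] : Set (Completion X) :=
  { y | ∃ (g : ℕ → X ≃ᵢ X) (x : X), DivergentSeq g ∧
      CauchySeq (fun n => g n x) ∧
      Tendsto (fun n => ((g n x : X) : Completion X)) atTop (𝓝 y) }

/-- The set `X_p ⊆ X̂` of special limit points of the action `(Iso(X), X)`. -/
def Xp (X : Type*) [MetricSpace X] : Set (Completion X) :=
  { y | ∃ (g : ℕ → X ≃ᵢ X) (x : X), DivergentSeq g ∧
      CauchySeq (fun n => g n x) ∧ CauchySeq (fun n => (g n).symm x) ∧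
      Tendsto (fun n => ((g n x : X) : Completion X)) atTop (𝓝 y) }

/-- `X ∪ X_l`, with `X` identified with its image in the completion `X̂`. -/
def XcupXl (X : Type*) [MetricSpace X] : Set (Completion X) :=
  Set.range ((↑) : X → Completion X) ∪ Xl X

/-- `X ∪ X_p`, with `X` identified with its image in the completion `X̂`. -/
def XcupXp (X : Type*) [MetricSpace X] : Set (Completion X) :=
  Set.range ((↑) : X → Completion X) ∪ Xp X

/-- The Ellis semigroup is a group: every element has a two-sided inverse in `E`
(under composition). -/
def EllisIsGroup (X : Type*) [MetricSpace X] : Prop :=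
  ∀ f ∈ Ellis X, ∃ g ∈ Ellis X, f ∘ g = id ∧ g ∘ f = id


section General

variable {α β ι : Type*} [PseudoMetricSpace α] [PseudoMetricSpace β]

theorem tendsto_apply_of_dense_of_isometry {l : Filter ι} {u : ι → α → β} {f : α → β}
    (hu : ∀ i, Isometry (u i)) (hf : Continuous f) {s : Set α} (hs : Dense s)
    (h : ∀ x ∈ s, Tendsto (fun i => u i x) l (𝓝 (f x))) (x : α) :
    Tendsto (fun i => u i x) l (𝓝 (f x)) := by
  have hequi : Equicontinuous u :=
    (LipschitzWith.uniformEquicontinuous u 1 fun i => (hu i).lipschitz).equicontinuous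
  have hclosed := hequi.isClosed_setOfPred_tendsto (l := l) hf
  exact hclosed.closure_subset_iff.2 h (hs x)

theorem cauchySeq_apply_of_dense_of_isometry {u : ℕ → α → β} (hu : ∀ n, Isometry (u n))
    {s : Set α} (hs : Dense s) (h : ∀ x ∈ s, CauchySeq fun n => u n x) (x : α) :
    CauchySeq fun n => u n x := by
  rw [Metric.cauchySeq_iff]
  intro ε hε
  obtain ⟨q, hq, hxq⟩ := hs.exists_dist_lt x (show 0 < ε / 3 by positivity)
  obtain ⟨N, hN⟩ := Metric.cauchySeq_iff.1 (h q hq) (ε / 3) (by positivity)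
  refine ⟨N, fun m hm n hn => ?_⟩
  calc dist (u m x) (u n x) ≤ dist (u m x) (u m q) + dist (u m q) (u n q) + dist (u n q) (u n x) :=
        dist_triangle4 _ _ _ _
    _ = dist x q + dist (u m q) (u n q) + dist q x := by rw [(hu m).dist_eq, (hu n).dist_eq]
    _ < ε / 3 + ε / 3 + ε / 3 := by rw [dist_comm q x]; gcongr; exact hN m hm n hn
    _ = ε := by ring

theorem tendsto_apply_of_tendsto_of_isometry {l : Filter ι} {v : ι → α → β}
    (hv : ∀ i, Isometry (v i)) {c : ι → α} {a : α} {b : β} (hc : Tendsto c l (𝓝 a))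
    (hb : Tendsto (fun i => v i a) l (𝓝 b)) : Tendsto (fun i => v i (c i)) l (𝓝 b) := by
  rw [tendsto_iff_dist_tendsto_zero] at hc hb ⊢
  refine squeeze_zero (fun _ => dist_nonneg) (fun i => ?_) (by simpa using hc.add hb)
  calc dist (v i (c i)) b ≤ dist (v i (c i)) (v i a) + dist (v i a) b := dist_triangle _ _ _
    _ = dist (c i) a + dist (v i a) b := by rw [(hv i).dist_eq]

end General

theorem UniformSpace.Completion.cauchySeq_coe_comp_iff {α : Type*} [UniformSpace α]
    {u : ℕ → α} : CauchySeq (fun n => (u n : Completion α)) ↔ CauchySeq u := by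
  rw [CauchySeq, CauchySeq, ← (Completion.isUniformInducing_coe α).cauchy_map_iff,
    Filter.map_map]
  rfl

theorem not_divergentSeq_iff {G : Type*} [TopologicalSpace G] {g : ℕ → G} :
    ¬ DivergentSeq g ↔ ∃ φ : ℕ → ℕ, StrictMono φ ∧ ∃ h, Tendsto (g ∘ φ) atTop (𝓝 h) := by
  simp [DivergentSeq]

theorem tendsto_down_atTop_ulift_nat : Tendsto (ULift.down : ULift ℕ → ℕ) atTop atTop :=
  tendsto_atTop_atTop_of_monotone (fun _ _ h => h) fun n => ⟨⟨n⟩, le_rfl⟩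

theorem tendsto_up_atTop_ulift_nat : Tendsto (ULift.up : ℕ → ULift ℕ) atTop atTop :=
  tendsto_atTop_atTop_of_monotone (fun _ _ h => h) fun n => ⟨n.down, le_rfl⟩

section Isometries

variable {X : Type*} [MetricSpace X]

theorem tendsto_isometryEquiv_iff {ι : Type*} {l : Filter ι} {u : ι → X ≃ᵢ X} {h : X ≃ᵢ X} :
    Tendsto u l (𝓝 h) ↔ ∀ x, Tendsto (fun i => u i x) l (𝓝 (h x)) := by
  rw [IsInducing.tendsto_nhds_iff ⟨rfl⟩, tendsto_pi_nhds]
  rfl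

theorem exists_subseq_tendsto_of_mapClusterPt [TopologicalSpace.SeparableSpace X]
    {g : ℕ → X ≃ᵢ X} {h : X ≃ᵢ X} (hg : MapClusterPt h atTop g) :
    ∃ φ : ℕ → ℕ, StrictMono φ ∧ Tendsto (g ∘ φ) atTop (𝓝 h) := by
  obtain ⟨s, hsc, hsd⟩ := TopologicalSpace.exists_countable_dense X
  have : Countable s := hsc.to_subtype
  -- the restriction to a countable dense set lands in a first-countable space
  let r : (X ≃ᵢ X) → (s → X) := fun g x => g x
  have hr : Continuous r :=
    continuous_pi fun x => (continuous_apply (x : X)).comp continuous_induced_dom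
  obtain ⟨φ, hφ, hlim⟩ := (hg.continuousAt_comp hr.continuousAt).tendsto_subseq
  refine ⟨φ, hφ, tendsto_isometryEquiv_iff.2 <|
    tendsto_apply_of_dense_of_isometry (fun n => (g (φ n)).isometry) h.continuous hsd ?_⟩
  exact fun x hx => tendsto_pi_nhds.1 hlim ⟨x, hx⟩

theorem DivergentSeq.divergentNet [TopologicalSpace.SeparableSpace X] {g : ℕ → X ≃ᵢ X}
    (hg : DivergentSeq g) : DivergentNet g := fun h hcl =>
  let ⟨φ, hφ, hlim⟩ := exists_subseq_tendsto_of_mapClusterPt hcl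
  hg φ hφ h hlim

theorem IsoCauchyIndivisible.cauchySeq [TopologicalSpace.SeparableSpace X]
    (hCI : IsoCauchyIndivisible X) {g : ℕ → X ≃ᵢ X} (hg : DivergentSeq g) {x : X}
    (hx : CauchySeq fun n => g n x) (y : X) : CauchySeq fun n => g n y := by
  -- `hCI` quantifies over index types of an arbitrary universe, hence the detour through `ULift ℕ`
  have hdiv : DivergentNet fun i : ULift ℕ => g i.down := fun h hcl =>
    hg.divergentNet h (hcl.of_comp tendsto_down_atTop_ulift_nat)
  have hy : CauchySeq fun i : ULift ℕ => g i.down y :=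
    hCI (ULift ℕ) _ hdiv ⟨x, hx.comp_tendsto tendsto_down_atTop_ulift_nat⟩ y
  exact hy.comp_tendsto tendsto_up_atTop_ulift_nat

end Isometries

section Ellis

variable {X : Type*} [MetricSpace X]

theorem isometry_hatIso (g : X ≃ᵢ X) : Isometry (hatIso g) :=
  g.isometry.completion_map

@[simp]
theorem hatIso_coe (g : X ≃ᵢ X) (x : X) : hatIso g x = (g x : Completion X) :=
  Completion.map_coe g.isometry.uniformContinuous x

theorem hatIso_hatIso_symm (g : X ≃ᵢ X) (p : Completion X) : hatIso g (hatIso g.symm p) = p := by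
  induction p using Completion.induction_on with
  | hp => exact isClosed_eq ((isometry_hatIso g).continuous.comp
      (isometry_hatIso g.symm).continuous) continuous_id
  | ih x => simp

theorem dist_hatIso_symm (g : X ≃ᵢ X) (p q : Completion X) :
    dist (hatIso g.symm p) q = dist p (hatIso g q) := by
  rw [← (isometry_hatIso g).dist_eq, hatIso_hatIso_symm]

theorem tendsto_hatIso_symm_iff {ι : Type*} {l : Filter ι} {g : ι → X ≃ᵢ X}
    {p q : Completion X} :
    Tendsto (fun i => hatIso (g i).symm p) l (𝓝 q) ↔ Tendsto (fun i => hatIso (g i) q) l (𝓝 p) := by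
  simp only [Metric.tendsto_nhds, dist_hatIso_symm, dist_comm p]

theorem tendsto_hatIso_of_tendsto {ι : Type*} {l : Filter ι} {g : ι → X ≃ᵢ X} {h : X ≃ᵢ X}
    (hg : Tendsto g l (𝓝 h)) : Tendsto (fun i => hatIso (g i)) l (𝓝 (hatIso h)) := by
  refine tendsto_pi_nhds.2 <| tendsto_apply_of_dense_of_isometry (fun i => isometry_hatIso (g i))
    (isometry_hatIso h).continuous Completion.denseRange_coe ?_
  rintro _ ⟨x, rfl⟩
  simp only [hatIso_coe]
  exact ((Completion.continuous_coe X).tendsto (h x)).comp (tendsto_isometryEquiv_iff.1 hg x)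

theorem hatIso_mem_ellis (g : X ≃ᵢ X) : hatIso g ∈ Ellis X :=
  subset_closure ⟨g, rfl⟩

theorem mem_ellis_of_tendsto {ι : Type*} {l : Filter ι} [l.NeBot] {g : ι → X ≃ᵢ X}
    {f : Completion X → Completion X} (hg : Tendsto (fun i => hatIso (g i)) l (𝓝 f)) :
    f ∈ Ellis X :=
  mem_closure_of_tendsto hg (Eventually.of_forall fun i => ⟨g i, rfl⟩)

theorem isometry_of_mem_ellis {f : Completion X → Completion X} (hf : f ∈ Ellis X) :
    Isometry f := by
  have hclosed : IsClosed {F : Completion X → Completion X | Isometry F} := by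
    simp only [Isometry, Set.ofPred_forall]
    exact isClosed_iInter fun a => isClosed_iInter fun b =>
      isClosed_eq ((continuous_apply a).edist (continuous_apply b)) continuous_const
  refine hclosed.closure_subset_iff.2 ?_ hf
  rintro _ ⟨g, rfl⟩
  exact isometry_hatIso g

theorem exists_seq_tendsto_of_mem_ellis [TopologicalSpace.SeparableSpace X]
    {f : Completion X → Completion X} (hf : f ∈ Ellis X) :
    ∃ g : ℕ → X ≃ᵢ X, Tendsto (fun n => hatIso (g n)) atTop (𝓝 f) := by
  have : TopologicalSpace.SeparableSpace (Completion X) :=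
    Completion.denseRange_coe.separableSpace (Completion.continuous_coe X)
  obtain ⟨s, hsc, hsd⟩ := TopologicalSpace.exists_countable_dense (Completion X)
  have : Countable s := hsc.to_subtype
  let r : (Completion X → Completion X) → (s → Completion X) := fun F p => F p
  have hr : Continuous r := continuous_pi fun p => continuous_apply (p : Completion X)
  obtain ⟨v, hv, hvf⟩ := mem_closure_iff_seq_limit.1 <|
    image_closure_subset_closure_image hr ⟨f, hf, rfl⟩
  choose F hF hFv using hv
  choose g hg using hF
  refine ⟨g, tendsto_pi_nhds.2 <| tendsto_apply_of_dense_of_isometry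
    (fun n => isometry_hatIso (g n)) (isometry_of_mem_ellis hf).continuous hsd fun p hp => ?_⟩
  have := tendsto_pi_nhds.1 hvf ⟨p, hp⟩
  simpa [← hFv, ← hg] using this

end Ellis

section Limits

variable {X : Type*} [MetricSpace X]

theorem apply_eq_of_tendsto_hatIso_symm {ι : Type*} {l : Filter ι} [l.NeBot] {g : ι → X ≃ᵢ X}
    {f : Completion X → Completion X} (hf : Tendsto (fun i => hatIso (g i)) l (𝓝 f))
    {p q : Completion X} (hpq : Tendsto (fun i => hatIso (g i).symm p) l (𝓝 q)) : f q = p :=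
  tendsto_nhds_unique (tendsto_pi_nhds.1 hf q : Tendsto (fun i => hatIso (g i) q) l _)
    (tendsto_hatIso_symm_iff.1 hpq)

theorem cauchySeq_symm_apply_of_tendsto_hatIso {g : ℕ → X ≃ᵢ X}
    {f : Completion X → Completion X} (hf : Tendsto (fun n => hatIso (g n)) atTop (𝓝 f)) {x : X}
    (hx : (x : Completion X) ∈ range f) : CauchySeq fun n => (g n).symm x := by
  obtain ⟨q, hq⟩ := hx
  have hlim : Tendsto (fun n => hatIso (g n).symm x) atTop (𝓝 q) :=
    tendsto_hatIso_symm_iff.2 (hq ▸ tendsto_pi_nhds.1 hf q)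
  simp only [hatIso_coe] at hlim
  exact Completion.cauchySeq_coe_comp_iff.1 hlim.cauchySeq

theorem exists_inverse_mem_ellis_of_bijective {g : ℕ → X ≃ᵢ X} {f : Completion X → Completion X}
    (hf : Tendsto (fun n => hatIso (g n)) atTop (𝓝 f)) (hbij : Function.Bijective f) :
    ∃ F ∈ Ellis X, f ∘ F = id ∧ F ∘ f = id := by
  refine ⟨Function.surjInv hbij.2, mem_ellis_of_tendsto (l := atTop) (g := fun n => (g n).symm) ?_,
    funext (Function.rightInverse_surjInv hbij.2), funext (Function.leftInverse_surjInv hbij)⟩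
  refine tendsto_pi_nhds.2 fun p => tendsto_hatIso_symm_iff.2 ?_
  simpa only [Function.surjInv_eq hbij.2] using tendsto_pi_nhds.1 hf (Function.surjInv hbij.2 p)

theorem tendsto_trans_symm_apply {g h : ℕ → X ≃ᵢ X} {x z : X} {y : Completion X}
    (hgx : Tendsto (fun n => (g n x : Completion X)) atTop (𝓝 y))
    (hhz : Tendsto (fun n => (h n z : Completion X)) atTop (𝓝 y)) :
    Tendsto (fun n => ((h n).trans (g n).symm) z) atTop (𝓝 x) := by
  have hdist := hhz.dist hgx
  rw [dist_self] at hdist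
  refine tendsto_iff_dist_tendsto_zero.2 (hdist.congr fun n => ?_)
  rw [Completion.dist_eq, ← (g n).isometry.dist_eq ((h n).trans (g n).symm z) x]
  simp

end Limits

section CauchyIndivisible

variable {X : Type*} [MetricSpace X] [TopologicalSpace.SeparableSpace X]

theorem eq_hatIso_or_exists_divergentSeq_of_mem_ellis {f : Completion X → Completion X}
    (hf : f ∈ Ellis X) : (∃ g : X ≃ᵢ X, f = hatIso g) ∨
      ∃ g : ℕ → X ≃ᵢ X, DivergentSeq g ∧ Tendsto (fun n => hatIso (g n)) atTop (𝓝 f) := by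
  obtain ⟨g, hgf⟩ := exists_seq_tendsto_of_mem_ellis hf
  by_cases hg : DivergentSeq g
  · exact Or.inr ⟨g, hg, hgf⟩
  · obtain ⟨φ, hφ, h, hh⟩ := not_divergentSeq_iff.1 hg
    exact Or.inl ⟨h, tendsto_nhds_unique (hgf.comp hφ.tendsto_atTop) (tendsto_hatIso_of_tendsto hh)⟩

namespace IsoCauchyIndivisible

variable (hCI : IsoCauchyIndivisible X)
include hCI

theorem exists_tendsto_hatIso {g : ℕ → X ≃ᵢ X} (hg : DivergentSeq g) {x : X}
    (hx : CauchySeq fun n => g n x) :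
    ∃ f : Completion X → Completion X, Tendsto (fun n => hatIso (g n)) atTop (𝓝 f) := by
  have hcauchy : ∀ p : Completion X, CauchySeq fun n => hatIso (g n) p := by
    refine cauchySeq_apply_of_dense_of_isometry (fun n => isometry_hatIso (g n))
      Completion.denseRange_coe ?_
    rintro _ ⟨y, rfl⟩
    simpa only [hatIso_coe] using Completion.cauchySeq_coe_comp_iff.2 (hCI.cauchySeq hg hx y)
  choose f hf using fun p => cauchySeq_tendsto_of_complete (hcauchy p)
  exact ⟨f, tendsto_pi_nhds.2 hf⟩

theorem exists_subseq_tendsto_hatIso {g : ℕ → X ≃ᵢ X} {x : X} (hx : CauchySeq fun n => g n x) :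
    ∃ φ : ℕ → ℕ, StrictMono φ ∧
      ∃ f : Completion X → Completion X, Tendsto (fun n => hatIso (g (φ n))) atTop (𝓝 f) := by
  by_cases hg : DivergentSeq g
  · exact ⟨id, strictMono_id, hCI.exists_tendsto_hatIso hg hx⟩
  · obtain ⟨φ, hφ, h, hh⟩ := not_divergentSeq_iff.1 hg
    exact ⟨φ, hφ, hatIso h, tendsto_hatIso_of_tendsto hh⟩

theorem Xl_subset_Xp_of_ellisIsGroup (hE : EllisIsGroup X) : Xl X ⊆ Xp X := by
  rintro y ⟨g, x, hg, hx, hy⟩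
  obtain ⟨f, hf⟩ := hCI.exists_tendsto_hatIso hg hx
  obtain ⟨f', -, hff', -⟩ := hE f (mem_ellis_of_tendsto hf)
  exact ⟨g, x, hg, hx, cauchySeq_symm_apply_of_tendsto_hatIso hf ⟨f' x, congrFun hff' x⟩, hy⟩

theorem exists_subseq_tendsto_hatIso_symm (hXlp : Xl X ⊆ Xp X) {g : ℕ → X ≃ᵢ X}
    (hg : DivergentSeq g) {x : X} {y : Completion X}
    (hgx : Tendsto (fun n => (g n x : Completion X)) atTop (𝓝 y)) :
    ∃ φ : ℕ → ℕ, StrictMono φ ∧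
      ∃ b, Tendsto (fun n => hatIso (g (φ n)).symm x) atTop (𝓝 b) := by
  obtain ⟨h, z, -, -, hz, hhz⟩ :=
    hXlp ⟨g, x, hg, Completion.cauchySeq_coe_comp_iff.1 hgx.cauchySeq, hgx⟩
  let w n := (h n).trans (g n).symm
  obtain ⟨φ, hφ, W, hW⟩ :=
    hCI.exists_subseq_tendsto_hatIso (tendsto_trans_symm_apply hgx hhz).cauchySeq
  obtain ⟨ψ, hψ, H, hH⟩ := hCI.exists_subseq_tendsto_hatIso (g := fun n => (h (φ n)).symm)
    (hz.comp_tendsto hφ.tendsto_atTop)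
  refine ⟨φ ∘ ψ, hφ.comp hψ, W (H x), ?_⟩
  have hlim := tendsto_apply_of_tendsto_of_isometry (fun n => isometry_hatIso (w (φ (ψ n))))
    (tendsto_pi_nhds.1 hH x) (tendsto_pi_nhds.1 (hW.comp hψ.tendsto_atTop) (H x))
  refine hlim.congr fun n => ?_
  simp [w]

theorem surjective_of_tendsto_hatIso (hXlp : Xl X ⊆ Xp X) {g : ℕ → X ≃ᵢ X}
    (hg : DivergentSeq g) {f : Completion X → Completion X}
    (hf : Tendsto (fun n => hatIso (g n)) atTop (𝓝 f)) : Function.Surjective f := by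
  have hclosed : IsClosed (range f) :=
    (isometry_of_mem_ellis (mem_ellis_of_tendsto hf)).isClosedEmbedding.isClosed_range
  suffices hX : range ((↑) : X → Completion X) ⊆ range f by
    have hdense := closure_mono hX
    rwa [Completion.denseRange_coe.closure_range, hclosed.closure_eq, univ_subset_iff,
      range_eq_univ] at hdense
  rintro _ ⟨x, rfl⟩
  obtain ⟨φ, hφ, b, hb⟩ := hCI.exists_subseq_tendsto_hatIso_symm hXlp hg
    (by simpa only [hatIso_coe] using tendsto_pi_nhds.1 hf x)
  exact ⟨b, apply_eq_of_tendsto_hatIso_symm (hf.comp hφ.tendsto_atTop) hb⟩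

theorem ellisIsGroup_of_Xl_subset_Xp (hXlp : Xl X ⊆ Xp X) : EllisIsGroup X := by
  intro f hf
  rcases eq_hatIso_or_exists_divergentSeq_of_mem_ellis hf with ⟨g, rfl⟩ | ⟨g, hg, hgf⟩
  · exact ⟨hatIso g.symm, hatIso_mem_ellis g.symm, funext (hatIso_hatIso_symm g),
      funext fun p => by simpa using hatIso_hatIso_symm g.symm p⟩
  · exact exists_inverse_mem_ellis_of_bijective hgf
      ⟨(isometry_of_mem_ellis hf).injective, hCI.surjective_of_tendsto_hatIso hXlp hg hgf⟩

end IsoCauchyIndivisible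

end CauchyIndivisible

theorem Xp_subset_Xl (X : Type*) [MetricSpace X] : Xp X ⊆ Xl X :=
  fun _ ⟨g, x, hg, hx, _, hy⟩ => ⟨g, x, hg, hx, hy⟩

/-- Proposition 5.10: the Ellis semigroup `E` is a group iff `X_l = X_p`. -/
theorem ellisIsGroup_iff_Xl_eq_Xp (X : Type*) [MetricSpace X]
    [TopologicalSpace.SeparableSpace X] (hCI : IsoCauchyIndivisible X) :
    EllisIsGroup X ↔ Xl X = Xp X :=
  ⟨fun hE => (hCI.Xl_subset_Xp_of_ellisIsGroup hE).antisymm (Xp_subset_Xl X),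
    fun h => hCI.ellisIsGroup_of_Xl_subset_Xp h.subset⟩

end
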